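/- arXiv:cond-mat/9801217 — 2 statements merged into one kernel-verified Lean document; each statement's English description precedes it below -/
import Mathlib

section
/- Let E, δ, s, m ∈ ℝ with δ ≥ 0, s > 0, m > 0, and let p, q, k be vectors in the Euclidean plane ℝ² satisfying: ‖p‖ ≥ m, ‖q‖ ≥ m, |‖p‖² − E| ≤ δ, |‖p + k‖² − E| ≤ δ, |‖q‖² − E| ≤ δ, |‖q + k‖² − E| ≤ δ, |p₁ q₂ − p₂ q₁| ≥ s ‖p‖ ‖q‖, and ‖k‖ ≤ s·m/2. Then ‖k‖ ≤ 4δ/(s·m). -/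
open scoped RealInnerProductSpace

set_option maxHeartbeats 400000

private lemma cross_aux (A B P Q I : ℝ) (hP : 0 ≤ P) (hQ : 0 ≤ Q) (hI : |I| ≤ P * Q) :
    A ^ 2 * Q ^ 2 + B ^ 2 * P ^ 2 - 2 * (A * B * I) ≤ (|A| * Q + |B| * P) ^ 2 := by
  have h1 : -(|A| * |B| * |I|) ≤ A * B * I := by
    have := neg_abs_le (A * B * I); rwa [abs_mul, abs_mul] at this
  have h2 : |A| * |B| * |I| ≤ |A| * |B| * (P * Q) :=
    mul_le_mul_of_nonneg_left hI (by positivity)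
  nlinarith [sq_abs A, sq_abs B, abs_nonneg A, abs_nonneg B]

/-- Sector conservation estimate: a transfer momentum `k` connecting two pairs of momenta in
the annulus `{ |‖·‖² − E| ≤ δ }`, in two directions `p, q` making an angle of sine at least
`s`, and a priori small (`‖k‖ ≤ s·m/2`), satisfies `‖k‖ ≤ 4δ/(s·m)`. -/
theorem transfer_momentum_bound (E δ s m : ℝ) (hδ : 0 ≤ δ) (hs : 0 < s) (hm : 0 < m)
    (p q k : EuclideanSpace ℝ (Fin 2))
    (hp : m ≤ ‖p‖) (hq : m ≤ ‖q‖)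
    (h1 : |‖p‖ ^ 2 - E| ≤ δ) (h2 : |‖p + k‖ ^ 2 - E| ≤ δ)
    (h3 : |‖q‖ ^ 2 - E| ≤ δ) (h4 : |‖q + k‖ ^ 2 - E| ≤ δ)
    (hangle : s * (‖p‖ * ‖q‖) ≤ |p 0 * q 1 - p 1 * q 0|)
    (hsmall : ‖k‖ ≤ s * m / 2) :
    ‖k‖ ≤ 4 * δ / (s * m) := by
  set a := p 0; set b := p 1; set c := q 0; set d := q 1; set x := k 0; set y := k 1
  set A := ⟪p, k⟫ with hAdef
  set B := ⟪q, k⟫ with hBdef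
  set np := ‖p‖; set nq := ‖q‖; set nk := ‖k‖
  have hnk0 : (0:ℝ) ≤ nk := norm_nonneg k
  have hnp0 : (0:ℝ) < np := lt_of_lt_of_le hm hp
  have hnq0 : (0:ℝ) < nq := lt_of_lt_of_le hm hq
  have hAc : A = a * x + b * y := by simp [hAdef, PiLp.inner_apply, Fin.sum_univ_two, a, b, x, y]; ring
  have hBc : B = c * x + d * y := by simp [hBdef, PiLp.inner_apply, Fin.sum_univ_two, c, d, x, y]; ring
  have hkc : nk ^ 2 = x ^ 2 + y ^ 2 := by
    rw [show nk ^ 2 = ⟪k, k⟫ from (real_inner_self_eq_norm_sq k).symm]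
    simp only [PiLp.inner_apply, Fin.sum_univ_two, RCLike.inner_apply, conj_trivial, x, y]; ring
  have hpc : np ^ 2 = a ^ 2 + b ^ 2 := by
    rw [show np ^ 2 = ⟪p, p⟫ from (real_inner_self_eq_norm_sq p).symm]
    simp only [PiLp.inner_apply, Fin.sum_univ_two, RCLike.inner_apply, conj_trivial, a, b]; ring
  have hqc : nq ^ 2 = c ^ 2 + d ^ 2 := by
    rw [show nq ^ 2 = ⟪q, q⟫ from (real_inner_self_eq_norm_sq q).symm]
    simp only [PiLp.inner_apply, Fin.sum_univ_two, RCLike.inner_apply, conj_trivial, c, d]; ring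
  have hpqc : ⟪p, q⟫ = a * c + b * d := by simp [PiLp.inner_apply, Fin.sum_univ_two, a, b, c, d]; ring
  -- bounds on A and B
  have hexp1 : ‖p + k‖ ^ 2 = np ^ 2 + 2 * A + nk ^ 2 := norm_add_sq_real p k
  have hexp2 : ‖q + k‖ ^ 2 = nq ^ 2 + 2 * B + nk ^ 2 := norm_add_sq_real q k
  rw [abs_le] at h1 h2 h3 h4
  have hA : |A| ≤ δ + nk ^ 2 / 2 := by
    rw [abs_le]; constructor <;> linarith [sq_nonneg nk, h1.1, h1.2, h2.1, h2.2]
  have hB : |B| ≤ δ + nk ^ 2 / 2 := by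
    rw [abs_le]; constructor <;> linarith [sq_nonneg nk, h3.1, h3.2, h4.1, h4.2]
  -- key geometric bound
  have hcs : |a * c + b * d| ≤ np * nq := hpqc ▸ abs_real_inner_le_norm p q
  have hkey : |a * d - b * c| * nk ≤ |A| * nq + |B| * np := by
    have h0 : (0:ℝ) ≤ |A| * nq + |B| * np := by positivity
    refine le_of_pow_le_pow_left₀ two_ne_zero h0 ?_
    have hlhs : (|a * d - b * c| * nk) ^ 2
        = A ^ 2 * nq ^ 2 + B ^ 2 * np ^ 2 - 2 * (A * B * (a * c + b * d)) := by
      rw [mul_pow, sq_abs, hkc, hpc, hqc, hAc, hBc]; ring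
    rw [hlhs]
    exact cross_aux A B np nq _ hnp0.le hnq0.le hcs
  -- chain
  have hchain : s * (np * nq) * nk ≤ (δ + nk ^ 2 / 2) * (np + nq) := by
    have h5 : s * (np * nq) * nk ≤ |a * d - b * c| * nk :=
      mul_le_mul_of_nonneg_right hangle hnk0
    have h6 : |A| * nq + |B| * np ≤ (δ + nk ^ 2 / 2) * (np + nq) := by
      linarith [mul_le_mul_of_nonneg_right hA hnq0.le, mul_le_mul_of_nonneg_right hB hnp0.le]
    linarith
  have hD : (0:ℝ) ≤ δ + nk ^ 2 / 2 := by positivity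
  have hm2 : m * (np + nq) ≤ 2 * (np * nq) := by
    linarith [mul_nonneg hnp0.le (sub_nonneg.mpr hq), mul_nonneg hnq0.le (sub_nonneg.mpr hp)]
  have step1 : (δ + nk ^ 2 / 2) * (m * (np + nq)) ≤ (δ + nk ^ 2 / 2) * (2 * (np * nq)) :=
    mul_le_mul_of_nonneg_left hm2 hD
  have step2 : s * (np * nq) * nk * m ≤ (δ + nk ^ 2 / 2) * (np + nq) * m :=
    mul_le_mul_of_nonneg_right hchain hm.le
  have step3 : s * m * nk ≤ 2 * (δ + nk ^ 2 / 2) := by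
    have hpq : (0:ℝ) < np * nq := mul_pos hnp0 hnq0
    rw [← mul_le_mul_iff_left₀ hpq]
    linarith [step1, step2]
  have step4 : nk * nk ≤ s * m / 2 * nk := mul_le_mul_of_nonneg_right hsmall hnk0
  rw [le_div_iff₀ (by positivity : (0:ℝ) < s * m)]
  linarith [step3, step4]
end

section
/- Let k ∈ ℝ², let f : ℝ² → ℂ be measurable with both u ↦ |f(u)| and u ↦ ‖u‖·|f(u)| integrable on ℝ², and let g ∈ L²(ℝ², ℂ). Then the function x ↦ ∫_{ℝ²} f(x − y) e^{i⟨k,y⟩} g(y) dy − e^{i⟨k,x⟩} ∫_{ℝ²} f(x − y) g(y) dy (defined for almost every x) belongs to L²(ℝ²) and its L² norm is at most ‖k‖ · ( ∫_{ℝ²} ‖u‖ |f(u)| du ) · ‖g‖_{L²}, where ⟨·,·⟩ is the Euclidean inner product on ℝ². -/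
open MeasureTheory RealInnerProductSpace
open scoped ENNReal

local notation "𝔼" => EuclideanSpace ℝ (Fin 2)

private lemma lint_sub_left' (F : 𝔼 → ℝ≥0∞) (hF : Measurable F) (x : 𝔼) :
    ∫⁻ y, F (x - y) = ∫⁻ y, F y :=
  MeasurePreserving.lintegral_comp
    ⟨measurable_const.sub measurable_id, Measure.map_sub_left_eq_self volume x⟩ hF

private lemma young' (F G : 𝔼 → ℝ≥0∞) (hF : Measurable F) (hG : Measurable G) :
    ∫⁻ x, (∫⁻ y, F (x - y) * G y) ^ (2:ℝ)
      ≤ (∫⁻ u, F u) ^ (2:ℝ) * ∫⁻ y, (G y) ^ (2:ℝ) := by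
  have h22 : Real.HolderConjugate 2 2 := by constructor <;> norm_num
  have hFx : ∀ x : 𝔼, Measurable fun y => F (x - y) :=
    fun x => hF.comp (measurable_const.sub measurable_id)
  have key : ∀ x : 𝔼, (∫⁻ y, F (x - y) * G y)
      ≤ (∫⁻ u, F u) ^ (1/2:ℝ) * (∫⁻ y, F (x - y) * (G y) ^ (2:ℝ)) ^ (1/2:ℝ) := by
    intro x
    have hm1 : Measurable fun y : 𝔼 => F (x - y) ^ (1/2:ℝ) :=
      ENNReal.continuous_rpow_const.measurable.comp (hFx x)
    have h := ENNReal.lintegral_mul_le_Lp_mul_Lq volume h22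
      hm1.aemeasurable (hm1.mul hG).aemeasurable
    calc (∫⁻ y, F (x - y) * G y)
        = ∫⁻ y, ((fun y => F (x-y) ^ (1/2:ℝ)) * fun y => F (x-y) ^ (1/2:ℝ) * G y) y := by
          apply lintegral_congr; intro y
          simp only [Pi.mul_apply]
          rw [← mul_assoc, ← ENNReal.rpow_add_of_nonneg _ _ (by norm_num) (by norm_num)]
          norm_num
      _ ≤ (∫⁻ y, (F (x-y) ^ (1/2:ℝ)) ^ (2:ℝ)) ^ (1/2:ℝ)
          * (∫⁻ y, (F (x-y) ^ (1/2:ℝ) * G y) ^ (2:ℝ)) ^ (1/2:ℝ) := h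
      _ = (∫⁻ u, F u) ^ (1/2:ℝ) * (∫⁻ y, F (x - y) * (G y) ^ (2:ℝ)) ^ (1/2:ℝ) := by
          congr 1
          · rw [← lint_sub_left' F hF x]; congr 1; apply lintegral_congr; intro y
            rw [← ENNReal.rpow_mul]
            norm_num
          · congr 1; apply lintegral_congr; intro y
            rw [ENNReal.mul_rpow_of_nonneg _ _ (by norm_num), ← ENNReal.rpow_mul]
            norm_num
  calc ∫⁻ x, (∫⁻ y, F (x - y) * G y) ^ (2:ℝ)
      ≤ ∫⁻ x, (∫⁻ u, F u) * ∫⁻ y, F (x - y) * (G y) ^ (2:ℝ) := by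
        apply lintegral_mono; intro x
        calc (∫⁻ y, F (x - y) * G y) ^ (2:ℝ)
            ≤ ((∫⁻ u, F u) ^ (1/2:ℝ) * (∫⁻ y, F (x - y) * (G y) ^ (2:ℝ)) ^ (1/2:ℝ)) ^ (2:ℝ) :=
              ENNReal.rpow_le_rpow (key x) (by norm_num)
          _ = (∫⁻ u, F u) * ∫⁻ y, F (x - y) * (G y) ^ (2:ℝ) := by
              rw [ENNReal.mul_rpow_of_nonneg _ _ (by norm_num), ← ENNReal.rpow_mul,
                ← ENNReal.rpow_mul]
              norm_num
    _ = (∫⁻ u, F u) * ∫⁻ x, ∫⁻ y, F (x - y) * (G y) ^ (2:ℝ) := by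
        have hm2 : Measurable fun p : 𝔼 × 𝔼 => F (p.1 - p.2) * (G p.2) ^ (2:ℝ) :=
          (hF.comp (measurable_fst.sub measurable_snd)).mul
            (ENNReal.continuous_rpow_const.measurable.comp (hG.comp measurable_snd))
        rw [lintegral_const_mul _ hm2.lintegral_prod_right']
    _ = (∫⁻ u, F u) * ∫⁻ y, ∫⁻ x, F (x - y) * (G y) ^ (2:ℝ) := by
        have hm2 : Measurable fun p : 𝔼 × 𝔼 => F (p.1 - p.2) * (G p.2) ^ (2:ℝ) :=
          (hF.comp (measurable_fst.sub measurable_snd)).mul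
            (ENNReal.continuous_rpow_const.measurable.comp (hG.comp measurable_snd))
        congr 1
        exact lintegral_lintegral_swap hm2.aemeasurable
    _ = (∫⁻ u, F u) ^ (2:ℝ) * ∫⁻ y, (G y) ^ (2:ℝ) := by
        have : ∀ y : 𝔼, ∫⁻ x, F (x - y) * (G y) ^ (2:ℝ) = (∫⁻ u, F u) * (G y) ^ (2:ℝ) := by
          intro y
          have hm3 : Measurable fun x : 𝔼 => F (x - y) :=
            hF.comp (measurable_id.sub measurable_const)
          rw [lintegral_mul_const _ hm3, lintegral_sub_right_eq_self F y]
        have hmG : Measurable fun y : 𝔼 => (G y) ^ (2:ℝ) :=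
          ENNReal.continuous_rpow_const.measurable.comp hG
        rw [lintegral_congr this, lintegral_const_mul _ hmG, ENNReal.rpow_two, pow_two,
          mul_assoc]

private lemma norm_exp_I_mul_sub_one_le' (θ : ℝ) : ‖Complex.exp (Complex.I * θ) - 1‖ ≤ |θ| := by
  have h2 : ‖Complex.exp (Complex.I * θ) - 1‖ ^ 2 ≤ |θ| ^ 2 := by
    rw [Complex.sq_norm, Complex.normSq_apply, sq_abs]
    have hre : (Complex.exp (Complex.I * (θ:ℂ)) - 1).re = Real.cos θ - 1 := by
      rw [mul_comm]; simp [Complex.exp_ofReal_mul_I_re]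
    have him : (Complex.exp (Complex.I * (θ:ℂ)) - 1).im = Real.sin θ := by
      rw [mul_comm]; simp [Complex.exp_ofReal_mul_I_im]
    rw [hre, him]
    have h1 := Real.one_sub_sq_div_two_le_cos (x := θ)
    nlinarith [Real.sin_sq_add_cos_sq θ]
  calc ‖Complex.exp (Complex.I * θ) - 1‖
      = Real.sqrt (‖Complex.exp (Complex.I * θ) - 1‖ ^ 2) :=
        (Real.sqrt_sq (norm_nonneg _)).symm
    _ ≤ Real.sqrt (|θ| ^ 2) := Real.sqrt_le_sqrt h2
    _ = |θ| := Real.sqrt_sq (abs_nonneg _)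

private lemma norm_exp_I_sub_exp_I' (a b : ℝ) :
    ‖Complex.exp (Complex.I * a) - Complex.exp (Complex.I * b)‖ ≤ |a - b| := by
  have key : Complex.exp (Complex.I * a) - Complex.exp (Complex.I * b)
      = Complex.exp (Complex.I * b) * (Complex.exp (Complex.I * ((a - b : ℝ) : ℂ)) - 1) := by
    rw [mul_sub, ← Complex.exp_add, mul_one]
    push_cast; ring_nf
  rw [key, norm_mul]
  have h1 : ‖Complex.exp (Complex.I * (b:ℂ))‖ = 1 := by
    rw [mul_comm, Complex.norm_exp_ofReal_mul_I]
  rw [h1, one_mul]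
  exact norm_exp_I_mul_sub_one_le' (a - b)

/-- Commutator estimate: the commutator of convolution by `f` with multiplication by the
modulation `e^{i⟨k,·⟩}`, applied to `g ∈ L²(ℝ²)`, lies in `L²` with norm at most
`‖k‖ · (∫ ‖u‖ |f u| du) · ‖g‖_{L²}`. -/
theorem commutator_convolution_modulation_bound (k : EuclideanSpace ℝ (Fin 2))
    (f : EuclideanSpace ℝ (Fin 2) → ℂ) (hf : Measurable f)
    (hf₁ : Integrable (fun u => ‖f u‖))
    (hf₂ : Integrable (fun u => ‖u‖ * ‖f u‖))
    (g : EuclideanSpace ℝ (Fin 2) → ℂ) (hg : MemLp g 2) :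
    MemLp (fun x => (∫ y, f (x - y) * Complex.exp (Complex.I * (⟪k, y⟫ : ℂ)) * g y)
        - Complex.exp (Complex.I * (⟪k, x⟫ : ℂ)) * ∫ y, f (x - y) * g y) 2
      ∧ eLpNorm (fun x => (∫ y, f (x - y) * Complex.exp (Complex.I * (⟪k, y⟫ : ℂ)) * g y)
          - Complex.exp (Complex.I * (⟪k, x⟫ : ℂ)) * ∫ y, f (x - y) * g y) 2
        ≤ ENNReal.ofReal (‖k‖ * ∫ u, ‖u‖ * ‖f u‖) * eLpNorm g 2 := by
  classical
  -- replace g by a measurable representative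
  obtain ⟨g', hg'sm, hgg'⟩ : ∃ g', StronglyMeasurable g' ∧ g =ᵐ[volume] g' :=
    ⟨hg.1.mk g, hg.1.stronglyMeasurable_mk, hg.1.ae_eq_mk⟩
  have hg' : MemLp g' 2 := hg.ae_eq hgg'
  have hg'm : Measurable g' := hg'sm.measurable
  set c : 𝔼 → ℂ := fun y => Complex.exp (Complex.I * (⟪k, y⟫ : ℂ)) with hc_def
  have hinner : Continuous fun y : 𝔼 => (⟪k, y⟫ : ℝ) := continuous_const.inner continuous_id
  have hc : Measurable c :=
    (Complex.continuous_exp.comp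
      (continuous_const.mul (Complex.continuous_ofReal.comp hinner))).measurable
  have hcnorm : ∀ y, ‖c y‖ = 1 := fun y => by
    rw [hc_def]; simp only []
    rw [mul_comm, Complex.norm_exp_ofReal_mul_I]
  -- pointwise replacement of g by g'
  have heq1 : ∀ x : 𝔼, (∫ y, f (x - y) * c y * g y) = ∫ y, f (x - y) * c y * g' y :=
    fun x => integral_congr_ae (hgg'.mono fun y hy => by simp only [hy])
  have heq2 : ∀ x : 𝔼, (∫ y, f (x - y) * g y) = ∫ y, f (x - y) * g' y :=
    fun x => integral_congr_ae (hgg'.mono fun y hy => by simp only [hy])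
  have hfun : (fun x => (∫ y, f (x - y) * c y * g y) - c x * ∫ y, f (x - y) * g y)
      = fun x => (∫ y, f (x - y) * c y * g' y) - c x * ∫ y, f (x - y) * g' y :=
    funext fun x => by rw [heq1 x, heq2 x]
  rw [show eLpNorm g 2 volume = eLpNorm g' 2 volume from eLpNorm_congr_ae hgg']
  rw [hfun]
  set h : 𝔼 → ℂ := fun x => (∫ y, f (x - y) * c y * g' y) - c x * ∫ y, f (x - y) * g' y
    with hh_def
  -- basic measurable ENNReal-valued data
  set F₀ : 𝔼 → ℝ≥0∞ := fun u => (‖f u‖₊ : ℝ≥0∞) with hF₀_def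
  set F₁ : 𝔼 → ℝ≥0∞ := fun u => (‖u‖₊ : ℝ≥0∞) * ‖f u‖₊ with hF₁_def
  set G : 𝔼 → ℝ≥0∞ := fun y => (‖g' y‖₊ : ℝ≥0∞) with hG_def
  have hF₀m : Measurable F₀ := hf.enorm
  have hF₁m : Measurable F₁ := measurable_id.enorm.mul hf.enorm
  have hGm : Measurable G := hg'm.enorm
  -- finiteness of the L¹ quantities
  have hI₀fin : (∫⁻ u, F₀ u) < ∞ := by
    have h1 : (∫⁻ u, (‖(‖f u‖)‖₊ : ℝ≥0∞)) < ∞ := hf₁.2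
    simpa only [nnnorm_norm] using h1
  have hI₁eq : (∫⁻ u, F₁ u) = ENNReal.ofReal (∫ u, ‖u‖ * ‖f u‖) := by
    rw [MeasureTheory.ofReal_integral_eq_lintegral_ofReal hf₂
      (Filter.Eventually.of_forall fun u => mul_nonneg (norm_nonneg _) (norm_nonneg _))]
    apply lintegral_congr; intro u
    rw [hF₁_def]
    rw [ENNReal.ofReal_mul (norm_nonneg _), ofReal_norm,
      ofReal_norm]
    rfl
  have hI₁fin : (∫⁻ u, F₁ u) < ∞ := by rw [hI₁eq]; exact ENNReal.ofReal_lt_top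
  -- L² quantity of g'
  have hJ : (∫⁻ y, (G y) ^ (2:ℝ)) ^ (1/2:ℝ) = eLpNorm g' 2 volume := by
    rw [eLpNorm_eq_lintegral_rpow_enorm_toReal two_ne_zero ENNReal.ofNat_ne_top]
    simp [hG_def]
    rfl
  have hJfin : (∫⁻ y, (G y) ^ (2:ℝ)) < ∞ := by
    rw [lt_top_iff_ne_top]
    intro htop
    have h3 := hJ
    rw [htop, ENNReal.top_rpow_of_pos (by norm_num)] at h3
    exact hg'.2.ne h3.symm
  -- convolution maps, measurability
  have hΦ₀m : Measurable fun x : 𝔼 => ∫⁻ y, F₀ (x - y) * G y := by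
    apply Measurable.lintegral_prod_right'
      (f := fun p : 𝔼 × 𝔼 => F₀ (p.1 - p.2) * G p.2)
    exact (hF₀m.comp (measurable_fst.sub measurable_snd)).mul (hGm.comp measurable_snd)
  have hΦ₁m : Measurable fun x : 𝔼 => ∫⁻ y, F₁ (x - y) * G y := by
    apply Measurable.lintegral_prod_right'
      (f := fun p : 𝔼 × 𝔼 => F₁ (p.1 - p.2) * G p.2)
    exact (hF₁m.comp (measurable_fst.sub measurable_snd)).mul (hGm.comp measurable_snd)
  -- a.e. finiteness of the two convolutions
  have haefin : ∀ (F : 𝔼 → ℝ≥0∞), Measurable F → (∫⁻ u, F u) < ∞ →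
      Measurable (fun x : 𝔼 => ∫⁻ y, F (x - y) * G y) →
      ∀ᵐ x : 𝔼, (∫⁻ y, F (x - y) * G y) < ∞ := by
    intro F hFm hFfin hm
    have hyoung := young' F G hFm hGm
    have hlt : (∫⁻ x, (∫⁻ y, F (x - y) * G y) ^ (2:ℝ)) < ∞ :=
      lt_of_le_of_lt hyoung (ENNReal.mul_lt_top
        (ENNReal.rpow_lt_top_of_nonneg (by norm_num) hFfin.ne) hJfin)
    have hmsq : Measurable fun x : 𝔼 => (∫⁻ y, F (x - y) * G y) ^ (2:ℝ) :=
      ENNReal.continuous_rpow_const.measurable.comp hm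
    filter_upwards [ae_lt_top hmsq hlt.ne] with x hx
    rw [lt_top_iff_ne_top]
    intro htop
    rw [htop, ENNReal.top_rpow_of_pos (by norm_num)] at hx
    exact absurd hx (lt_irrefl ⊤)
  have hae₀ := haefin F₀ hF₀m hI₀fin hΦ₀m
  have hae₁ := haefin F₁ hF₁m hI₁fin hΦ₁m
  -- strong measurability of h
  have hφm : Measurable fun p : 𝔼 × 𝔼 => f (p.1 - p.2) * c p.2 * g' p.2 :=
    ((hf.comp (measurable_fst.sub measurable_snd)).mul (hc.comp measurable_snd)).mul
      (hg'm.comp measurable_snd)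
  have hψm : Measurable fun p : 𝔼 × 𝔼 => f (p.1 - p.2) * g' p.2 :=
    (hf.comp (measurable_fst.sub measurable_snd)).mul (hg'm.comp measurable_snd)
  have hsm : StronglyMeasurable h := by
    apply StronglyMeasurable.sub
    · exact hφm.stronglyMeasurable.integral_prod_right'
    · exact (hc.stronglyMeasurable.mul hψm.stronglyMeasurable.integral_prod_right')
  -- a.e. pointwise bound
  have hbound : ∀ᵐ x : 𝔼, (‖h x‖₊ : ℝ≥0∞) ≤ (‖k‖₊ : ℝ≥0∞) * ∫⁻ y, F₁ (x - y) * G y := by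
    filter_upwards [hae₀, hae₁] with x h₀ h₁
    have hφint : Integrable (fun y => f (x - y) * c y * g' y) := by
      constructor
      · exact (((hf.comp (measurable_const.sub measurable_id)).mul hc).mul
          hg'm).aestronglyMeasurable
      · show (∫⁻ y, (‖f (x - y) * c y * g' y‖₊ : ℝ≥0∞)) < ∞
        calc ∫⁻ y, (‖f (x - y) * c y * g' y‖₊ : ℝ≥0∞)
            = ∫⁻ y, F₀ (x - y) * G y := by
              apply lintegral_congr; intro y
              simp only [hF₀_def, hG_def, nnnorm_mul, ENNReal.coe_mul]
              have : (‖c y‖₊ : ℝ≥0∞) = 1 := by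
                rw [← enorm_eq_nnnorm, ← ofReal_norm, hcnorm y]; simp
              rw [mul_assoc, mul_comm (‖c y‖₊ : ℝ≥0∞), ← mul_assoc, mul_assoc, this, mul_one]
          _ < ∞ := h₀
    have hψint : Integrable (fun y => f (x - y) * g' y) := by
      constructor
      · exact ((hf.comp (measurable_const.sub measurable_id)).mul hg'm).aestronglyMeasurable
      · show (∫⁻ y, (‖f (x - y) * g' y‖₊ : ℝ≥0∞)) < ∞
        calc ∫⁻ y, (‖f (x - y) * g' y‖₊ : ℝ≥0∞)
            ≤ ∫⁻ y, F₀ (x - y) * G y := by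
              apply lintegral_mono; intro y
              simp [hF₀_def, hG_def, nnnorm_mul]
          _ < ∞ := h₀
    have hrw : h x = ∫ y, (f (x - y) * c y * g' y - c x * (f (x - y) * g' y)) := by
      rw [hh_def]
      simp only []
      rw [integral_sub hφint (hψint.const_mul (c x))]
      simp only [← smul_eq_mul, integral_smul]
    rw [hrw]
    calc (‖∫ y, (f (x - y) * c y * g' y - c x * (f (x - y) * g' y))‖₊ : ℝ≥0∞)
        ≤ ∫⁻ y, (‖f (x - y) * c y * g' y - c x * (f (x - y) * g' y)‖₊ : ℝ≥0∞) :=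
          enorm_integral_le_lintegral_enorm _
      _ ≤ ∫⁻ y, (‖k‖₊ : ℝ≥0∞) * (F₁ (x - y) * G y) := by
          apply lintegral_mono; intro y
          dsimp only
          have hfactor : f (x - y) * c y * g' y - c x * (f (x - y) * g' y)
              = f (x - y) * (c y - c x) * g' y := by ring
          rw [hfactor]
          rw [← enorm_eq_nnnorm, ← ofReal_norm]
          have hreal : ‖f (x - y) * (c y - c x) * g' y‖
              ≤ ‖k‖ * ((‖x - y‖ * ‖f (x - y)‖) * ‖g' y‖) := by
            rw [norm_mul, norm_mul]
            have hcc : ‖c y - c x‖ ≤ ‖k‖ * ‖x - y‖ := by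
              rw [hc_def]
              simp only []
              calc ‖Complex.exp (Complex.I * (⟪k, y⟫ : ℂ))
                    - Complex.exp (Complex.I * (⟪k, x⟫ : ℂ))‖
                  ≤ |(⟪k, y⟫ : ℝ) - ⟪k, x⟫| := norm_exp_I_sub_exp_I' _ _
                _ = |(⟪k, y - x⟫ : ℝ)| := by rw [inner_sub_right]
                _ ≤ ‖k‖ * ‖y - x‖ := abs_real_inner_le_norm k (y - x)
                _ = ‖k‖ * ‖x - y‖ := by rw [norm_sub_rev]
            calc ‖f (x - y)‖ * ‖c y - c x‖ * ‖g' y‖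
                ≤ ‖f (x - y)‖ * (‖k‖ * ‖x - y‖) * ‖g' y‖ := by
                  apply mul_le_mul_of_nonneg_right _ (norm_nonneg _)
                  exact mul_le_mul_of_nonneg_left hcc (norm_nonneg _)
              _ = ‖k‖ * ((‖x - y‖ * ‖f (x - y)‖) * ‖g' y‖) := by ring
          calc ENNReal.ofReal ‖f (x - y) * (c y - c x) * g' y‖
              ≤ ENNReal.ofReal (‖k‖ * ((‖x - y‖ * ‖f (x - y)‖) * ‖g' y‖)) :=
                ENNReal.ofReal_le_ofReal hreal
            _ = (‖k‖₊ : ℝ≥0∞) * (F₁ (x - y) * G y) := by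
                rw [ENNReal.ofReal_mul (norm_nonneg _),
                  ENNReal.ofReal_mul (mul_nonneg (norm_nonneg _) (norm_nonneg _)),
                  ENNReal.ofReal_mul (norm_nonneg _)]
                simp only [hF₁_def, hG_def, ofReal_norm, enorm_eq_nnnorm]
      _ = (‖k‖₊ : ℝ≥0∞) * ∫⁻ y, F₁ (x - y) * G y := by
          rw [lintegral_const_mul]
          exact (hF₁m.comp (measurable_const.sub measurable_id)).mul hGm
  -- the eLpNorm bound
  have hsnorm : eLpNorm h 2 volume
      ≤ ENNReal.ofReal (‖k‖ * ∫ u, ‖u‖ * ‖f u‖) * eLpNorm g' 2 volume := by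
    rw [eLpNorm_eq_lintegral_rpow_enorm_toReal two_ne_zero ENNReal.ofNat_ne_top]
    simp only [ENNReal.toReal_ofNat]
    calc (∫⁻ x, (‖h x‖₊ : ℝ≥0∞) ^ (2:ℝ)) ^ (1/2:ℝ)
        ≤ (∫⁻ x, ((‖k‖₊ : ℝ≥0∞) * ∫⁻ y, F₁ (x - y) * G y) ^ (2:ℝ)) ^ (1/2:ℝ) := by
          apply ENNReal.rpow_le_rpow _ (by norm_num)
          apply lintegral_mono_ae
          filter_upwards [hbound] with x hx
          exact ENNReal.rpow_le_rpow hx (by norm_num)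
      _ = ((‖k‖₊ : ℝ≥0∞) ^ (2:ℝ) * ∫⁻ x, (∫⁻ y, F₁ (x - y) * G y) ^ (2:ℝ)) ^ (1/2:ℝ) := by
          congr 1
          rw [← lintegral_const_mul]
          · apply lintegral_congr; intro x
            rw [ENNReal.mul_rpow_of_nonneg _ _ (by norm_num)]
          · exact ENNReal.continuous_rpow_const.measurable.comp hΦ₁m
      _ ≤ ((‖k‖₊ : ℝ≥0∞) ^ (2:ℝ) * ((∫⁻ u, F₁ u) ^ (2:ℝ) * ∫⁻ y, (G y) ^ (2:ℝ))) ^ (1/2:ℝ) := by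
          apply ENNReal.rpow_le_rpow _ (by norm_num)
          exact mul_le_mul_right (young' F₁ G hF₁m hGm) _
      _ = (‖k‖₊ : ℝ≥0∞) * (∫⁻ u, F₁ u) * (∫⁻ y, (G y) ^ (2:ℝ)) ^ (1/2:ℝ) := by
          rw [ENNReal.mul_rpow_of_nonneg _ _ (by norm_num),
            ENNReal.mul_rpow_of_nonneg _ _ (by norm_num), ← ENNReal.rpow_mul,
            ← ENNReal.rpow_mul]
          norm_num [mul_assoc]
      _ = ENNReal.ofReal (‖k‖ * ∫ u, ‖u‖ * ‖f u‖) * eLpNorm g' 2 volume := by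
          rw [hJ, hI₁eq, ENNReal.ofReal_mul (norm_nonneg _), ofReal_norm]
          rfl
  refine ⟨⟨hsm.aestronglyMeasurable, ?_⟩, hsnorm⟩
  exact lt_of_le_of_lt hsnorm (ENNReal.mul_lt_top ENNReal.ofReal_lt_top hg'.2)
end
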